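/- arXiv:2106.07646 — 2 statements merged into one kernel-verified Lean document; each statement's English description precedes it below -/
import Mathlib

section
/- Let A be an assembly with a Guilbaud voting system 𝓔 and a profile assignment π : A → ZMod 6, and let ≻ be the resulting collective preference relation on the three candidates. Then ≻ is a strict linear order (irreflexive, transitive, and total on distinct candidates) if and only if condition (C) holds: there exists p ∈ ZMod 6 such that both coalitions {v | π v ∈ {p, p+1, p+2}} and {v | π v ∈ {p+1, p+2, p+3}} are efficient. -/
/-!
The voters ranking `x` above `y` are exactly those whose profile lies in an arc
`{q, q + 1, q + 2}` of three consecutive profiles, and the voters ranking `y` above `x` form the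
antipodal arc, its complement. Hence `≻` is complete, irreflexive since `∅` is not efficient,
and by (C1) exactly one arc of each antipodal pair is efficient. For distinct `x, y, z` the arcs
of `x ≻ y` and `y ≻ z` are two steps apart with the arc of `x ≻ z` between them, so `≻` is
transitive iff efficiency of the arcs at `q` and `q + 2` always forces efficiency of the arc at
`q + 1`. Given antipodality, this fails only for the alternating patterns `{0, 2, 4}` and
`{1, 3, 5}` of efficient arcs, i.e. exactly when no two consecutive arcs are efficient.
-/

/-- The rank (position, 0 = first) of candidate `x` in the ranking labeled `p`.
Profile 1 is a>b>c, 2 is a>c>b, 3 is c>a>b, 4 is c>b>a, 5 is b>c>a, 0 is b>a>c,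
with candidates a = 0, b = 1, c = 2 in `Fin 3`. -/
def rank (p : ZMod 6) : Fin 3 → Fin 3 :=
  match p.val with
  | 0 => ![1, 0, 2]  -- b>a>c
  | 1 => ![0, 1, 2]  -- a>b>c
  | 2 => ![0, 2, 1]  -- a>c>b
  | 3 => ![1, 2, 0]  -- c>a>b
  | 4 => ![2, 1, 0]  -- c>b>a
  | _ => ![2, 0, 1]  -- b>c>a

/-- The strict linear order on candidates given by profile `p`: `x` is ranked above `y`. -/
def pref (p : ZMod 6) (x y : Fin 3) : Prop := rank p x < rank p y

/-- The collective preference: `x ≻ y` iff the coalition of voters preferring `x` to `y`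
is efficient. -/
def collPref {A : Type*} (𝓔 : Set (Set A)) (π : A → ZMod 6) (x y : Fin 3) : Prop :=
  {v : A | pref (π v) x y} ∈ 𝓔

section GuilbaudVotingSystem

variable {A : Type*} {𝓔 : Set (Set A)}

theorem compl_mem_iff_not_mem (hC1 : ∀ K : Set A, K ∈ 𝓔 ↔ Kᶜ ∉ 𝓔) (K : Set A) :
    Kᶜ ∈ 𝓔 ↔ K ∉ 𝓔 := by
  rw [hC1, compl_compl]

theorem empty_not_mem (hC1 : ∀ K : Set A, K ∈ 𝓔 ↔ Kᶜ ∉ 𝓔)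
    (hC2 : ∀ K L : Set A, K ∈ 𝓔 → K ⊆ L → L ∈ 𝓔) : ∅ ∉ 𝓔 := fun h =>
  (hC1 ∅).1 h (Set.compl_empty ▸ hC2 ∅ Set.univ h (Set.subset_univ _))

end GuilbaudVotingSystem

theorem ZMod.exists_adjacent_iff_forall_between {e : ZMod 6 → Prop}
    (he : ∀ p, e (p + 3) ↔ ¬ e p) :
    (∃ p, e p ∧ e (p + 1)) ↔ ∀ q, e q → e (q + 2) → e (q + 1) := by
  have antipode : ∀ p q, q = p + 3 → (e q ↔ ¬ e p) := fun p _ h => h ▸ he p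
  constructor
  · rintro ⟨p, hp, hp1⟩ q hq hq2
    by_contra hq1
    have hq3 : ¬ e (q + 3) := fun h => (he q).1 h hq
    have hq5 : ¬ e (q + 5) := fun h => (antipode (q + 2) _ (by ring)).1 h hq2
    have offsets : ∀ p q : ZMod 6,
        p = q ∨ p = q + 1 ∨ p = q + 2 ∨ p = q + 3 ∨ p = q + 4 ∨ p = q + 5 := by decide
    rcases offsets p q with rfl | rfl | rfl | rfl | rfl | rfl
    · exact hq1 hp1
    · exact hq1 hp
    · exact hq3 (by rwa [add_assoc] at hp1)
    · exact hq3 hp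
    · exact hq5 (by rwa [add_assoc] at hp1)
    · exact hq5 hp
  · intro between
    by_contra! no_adjacent
    -- starting from any `q` with `e q`, the values of `e` would alternate
    obtain ⟨q, hq⟩ : ∃ q, e q := (em (e 0)).elim (⟨0, ·⟩) fun h => ⟨3, (he 0).2 h⟩
    have hq4 : e (q + 4) := (antipode (q + 1) _ (by ring)).2 (no_adjacent q hq)
    have hq5 : ¬ e (q + 5) := by rw [show q + 5 = q + 4 + 1 by ring]; exact no_adjacent _ hq4
    have hq2 : e (q + 2) := not_not.1 fun h => hq5 ((antipode (q + 2) _ (by ring)).2 h)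
    exact no_adjacent q hq (between q hq hq2)

def arc (p : ZMod 6) : Set (ZMod 6) := {p, p + 1, p + 2}

theorem arc_add_three (p : ZMod 6) : arc (p + 3) = (arc p)ᶜ := by
  ext q
  simp only [arc, Set.mem_insert_iff, Set.mem_singleton_iff, Set.mem_compl_iff]
  revert p q
  decide

theorem arc_add_one (p : ZMod 6) : arc (p + 1) = {p + 1, p + 2, p + 3} := by
  simp only [arc, add_assoc]
  norm_num

instance (p : ZMod 6) : DecidableRel (pref p) := fun x y =>
  inferInstanceAs (Decidable (rank p x < rank p y))

/-- `arcStart x y` is where the arc of profiles ranking `x` above `y` starts. -/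
def arcStart : Fin 3 → Fin 3 → ZMod 6 := ![![0, 1, 0], ![4, 0, 5], ![3, 2, 0]]

theorem setOf_pref_eq_arc {x y : Fin 3} (hxy : x ≠ y) :
    {p | pref p x y} = arc (arcStart x y) := by
  ext p
  simp only [arc, Set.mem_ofPred_eq, Set.mem_insert_iff, Set.mem_singleton_iff]
  revert p x y
  decide

theorem setOf_pref_self (x : Fin 3) : {p | pref p x x} = ∅ :=
  Set.eq_empty_of_forall_notMem fun p => lt_irrefl (rank p x)

theorem arcStart_swap {x y : Fin 3} (hxy : x ≠ y) : arcStart y x = arcStart x y + 3 := by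
  revert x y
  decide

theorem exists_arcStart_between {x y z : Fin 3} (hxy : x ≠ y) (hyz : y ≠ z) (hxz : x ≠ z) :
    ∃ q, (arcStart x y = q ∧ arcStart y z = q + 2 ∨ arcStart x y = q + 2 ∧ arcStart y z = q) ∧
      arcStart x z = q + 1 := by
  revert x y z
  decide

theorem exists_arcStart_eq (q : ZMod 6) : ∃ x y z : Fin 3, x ≠ y ∧ y ≠ z ∧ x ≠ z ∧
    (arcStart x y = q ∧ arcStart y z = q + 2 ∨ arcStart x y = q + 2 ∧ arcStart y z = q) ∧
      arcStart x z = q + 1 := by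
  revert q
  decide

section CollectivePreference

variable {A : Type*} {𝓔 : Set (Set A)} {π : A → ZMod 6}

def ArcEfficient (𝓔 : Set (Set A)) (π : A → ZMod 6) (p : ZMod 6) : Prop := π ⁻¹' arc p ∈ 𝓔

theorem arcEfficient_add_three (hC1 : ∀ K : Set A, K ∈ 𝓔 ↔ Kᶜ ∉ 𝓔) (p : ZMod 6) :
    ArcEfficient 𝓔 π (p + 3) ↔ ¬ ArcEfficient 𝓔 π p := by
  rw [ArcEfficient, arc_add_three, Set.preimage_compl, compl_mem_iff_not_mem hC1, ArcEfficient]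

theorem collPref_iff_arcEfficient {x y : Fin 3} (hxy : x ≠ y) :
    collPref 𝓔 π x y ↔ ArcEfficient 𝓔 π (arcStart x y) := by
  rw [ArcEfficient, ← setOf_pref_eq_arc hxy]
  rfl

theorem not_collPref_self (hC1 : ∀ K : Set A, K ∈ 𝓔 ↔ Kᶜ ∉ 𝓔)
    (hC2 : ∀ K L : Set A, K ∈ 𝓔 → K ⊆ L → L ∈ 𝓔) (x : Fin 3) : ¬ collPref 𝓔 π x x := by
  change π ⁻¹' {p | pref p x x} ∉ 𝓔
  rw [setOf_pref_self, Set.preimage_empty]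
  exact empty_not_mem hC1 hC2

theorem collPref_swap_iff (hC1 : ∀ K : Set A, K ∈ 𝓔 ↔ Kᶜ ∉ 𝓔) {x y : Fin 3} (hxy : x ≠ y) :
    collPref 𝓔 π y x ↔ ¬ collPref 𝓔 π x y := by
  rw [collPref_iff_arcEfficient hxy.symm, collPref_iff_arcEfficient hxy, arcStart_swap hxy,
    arcEfficient_add_three hC1]

theorem transitive_collPref_iff (hC1 : ∀ K : Set A, K ∈ 𝓔 ↔ Kᶜ ∉ 𝓔) :
    Transitive (collPref 𝓔 π) ↔
      ∀ q, ArcEfficient 𝓔 π q → ArcEfficient 𝓔 π (q + 2) → ArcEfficient 𝓔 π (q + 1) := by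
  constructor
  · intro trans q hq hq2
    obtain ⟨x, y, z, hxy, hyz, hxz, hshape, hmid⟩ := exists_arcStart_eq q
    simp only [← hmid, ← collPref_iff_arcEfficient hxz]
    rcases hshape with ⟨hfst, hsnd⟩ | ⟨hfst, hsnd⟩
    · exact trans ((collPref_iff_arcEfficient hxy).2 (hfst ▸ hq))
        ((collPref_iff_arcEfficient hyz).2 (hsnd ▸ hq2))
    · exact trans ((collPref_iff_arcEfficient hxy).2 (hfst ▸ hq2))
        ((collPref_iff_arcEfficient hyz).2 (hsnd ▸ hq))
  · intro between x y z h₁ h₂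
    obtain rfl | hxy := eq_or_ne x y
    · exact h₂
    obtain rfl | hyz := eq_or_ne y z
    · exact h₁
    obtain rfl | hxz := eq_or_ne x z
    · exact ((collPref_swap_iff hC1 hxy).1 h₂ h₁).elim
    obtain ⟨q, hshape, hmid⟩ := exists_arcStart_between hxy hyz hxz
    rw [collPref_iff_arcEfficient hxy] at h₁
    rw [collPref_iff_arcEfficient hyz] at h₂
    rw [collPref_iff_arcEfficient hxz, hmid]
    rcases hshape with ⟨hfst, hsnd⟩ | ⟨hfst, hsnd⟩
    · exact between q (hfst ▸ h₁) (hsnd ▸ h₂)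
    · exact between q (hsnd ▸ h₂) (hfst ▸ h₁)

end CollectivePreference

theorem condorcet_linear_iff_conditionC {A : Type*} (𝓔 : Set (Set A))
    (hC1 : ∀ K : Set A, K ∈ 𝓔 ↔ Kᶜ ∉ 𝓔)
    (hC2 : ∀ K L : Set A, K ∈ 𝓔 → K ⊆ L → L ∈ 𝓔)
    (π : A → ZMod 6) :
    (Irreflexive (collPref 𝓔 π) ∧ Transitive (collPref 𝓔 π) ∧
      ∀ x y : Fin 3, x ≠ y → collPref 𝓔 π x y ∨ collPref 𝓔 π y x) ↔
    (∃ p : ZMod 6,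
      {v : A | π v ∈ ({p, p + 1, p + 2} : Set (ZMod 6))} ∈ 𝓔 ∧
      {v : A | π v ∈ ({p + 1, p + 2, p + 3} : Set (ZMod 6))} ∈ 𝓔) := by
  have conditionC_iff : (∃ p : ZMod 6,
      {v : A | π v ∈ ({p, p + 1, p + 2} : Set (ZMod 6))} ∈ 𝓔 ∧
      {v : A | π v ∈ ({p + 1, p + 2, p + 3} : Set (ZMod 6))} ∈ 𝓔) ↔
      ∃ p, ArcEfficient 𝓔 π p ∧ ArcEfficient 𝓔 π (p + 1) := by
    simp only [ArcEfficient, arc_add_one]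
    rfl
  rw [conditionC_iff, ZMod.exists_adjacent_iff_forall_between (arcEfficient_add_three hC1),
    ← transitive_collPref_iff hC1]
  refine ⟨fun h => h.2.1, fun trans => ⟨not_collPref_self hC1 hC2, trans, fun x y hxy =>
    (em _).imp_right (collPref_swap_iff hC1 hxy).2⟩⟩
end

section
/- Let A be an assembly with a Guilbaud voting system 𝓔 and a profile assignment π : A → ZMod 6. If the collective preference relation ≻ on the three candidates is a strict linear order (irreflexive, transitive, and total on distinct candidates), then there exists p ∈ ZMod 6 such that both coalitions {v | π v ∈ {p, p+1, p+2}} and {v | π v ∈ {p+1, p+2, p+3}} are efficient. -/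
theorem forall_pref_imp_of_chain {R : Fin 3 → Fin 3 → Prop} (htrans : Transitive R)
    {r : ZMod 6} {x y z : Fin 3} (hr : ∀ u v, pref r u v ↔ (u, v) ∈ [(x, y), (y, z), (x, z)])
    (hxy : R x y) (hyz : R y z) : ∀ u v, pref r u v → R u v := by
  intro u v h
  have hxz := htrans hxy hyz
  simp only [hr, List.mem_cons, Prod.mk.injEq, List.not_mem_nil, or_false] at h
  rcases h with ⟨rfl, rfl⟩ | ⟨rfl, rfl⟩ | ⟨rfl, rfl⟩ <;> assumption

theorem exists_pref_imp_of_total {R : Fin 3 → Fin 3 → Prop} (htrans : Transitive R)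
    (htotal : ∀ x y : Fin 3, x ≠ y → R x y ∨ R y x) :
    ∃ r : ZMod 6, ∀ x y, pref r x y → R x y := by
  rcases htotal 0 1 (by decide) with h01 | h10
  · rcases htotal 1 2 (by decide) with h12 | h21
    · exact ⟨1, forall_pref_imp_of_chain htrans (by decide) h01 h12⟩
    · rcases htotal 0 2 (by decide) with h02 | h20
      · exact ⟨2, forall_pref_imp_of_chain htrans (by decide) h02 h21⟩
      · exact ⟨3, forall_pref_imp_of_chain htrans (by decide) h20 h01⟩
  · rcases htotal 1 2 (by decide) with h12 | h21
    · rcases htotal 0 2 (by decide) with h02 | h20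
      · exact ⟨0, forall_pref_imp_of_chain htrans (by decide) h10 h02⟩
      · exact ⟨5, forall_pref_imp_of_chain htrans (by decide) h12 h20⟩
    · exact ⟨4, forall_pref_imp_of_chain htrans (by decide) h21 h10⟩

theorem exists_consecutive_windows (r : ZMod 6) :
    ∃ p : ZMod 6,
      (∃ x y, pref r x y ∧ ∀ q, pref q x y ↔ q ∈ ({p, p + 1, p + 2} : Set (ZMod 6))) ∧
      (∃ x y, pref r x y ∧ ∀ q, pref q x y ↔ q ∈ ({p + 1, p + 2, p + 3} : Set (ZMod 6))) := by
  simp only [Set.mem_insert_iff, Set.mem_singleton_iff]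
  revert r
  decide

theorem mem_of_collPref {A : Type*} {𝓔 : Set (Set A)} {π : A → ZMod 6} {S : Set (ZMod 6)}
    {x y : Fin 3} (hS : ∀ q, pref q x y ↔ q ∈ S) (hxy : collPref 𝓔 π x y) :
    {v : A | π v ∈ S} ∈ 𝓔 := by
  simpa only [collPref, hS] using hxy

theorem linear_implies_conditionC_general {A : Type*} (𝓔 : Set (Set A))
    (π : A → ZMod 6)
    (htrans : Transitive (collPref 𝓔 π))
    (htotal : ∀ x y : Fin 3, x ≠ y → collPref 𝓔 π x y ∨ collPref 𝓔 π y x) :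
    ∃ p : ZMod 6,
      {v : A | π v ∈ ({p, p + 1, p + 2} : Set (ZMod 6))} ∈ 𝓔 ∧
      {v : A | π v ∈ ({p + 1, p + 2, p + 3} : Set (ZMod 6))} ∈ 𝓔 := by
  obtain ⟨r, hr⟩ := exists_pref_imp_of_total htrans htotal
  obtain ⟨p, ⟨x, y, hxy, hS⟩, ⟨x', y', hxy', hS'⟩⟩ := exists_consecutive_windows r
  exact ⟨p, mem_of_collPref hS (hr x y hxy), mem_of_collPref hS' (hr x' y' hxy')⟩

theorem linear_implies_conditionC {A : Type*} (𝓔 : Set (Set A))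
    (hC1 : ∀ K : Set A, K ∈ 𝓔 ↔ Kᶜ ∉ 𝓔)
    (hC2 : ∀ K L : Set A, K ∈ 𝓔 → K ⊆ L → L ∈ 𝓔)
    (π : A → ZMod 6)
    (hirr : Irreflexive (collPref 𝓔 π))
    (htrans : Transitive (collPref 𝓔 π))
    (htotal : ∀ x y : Fin 3, x ≠ y → collPref 𝓔 π x y ∨ collPref 𝓔 π y x) :
    ∃ p : ZMod 6,
      {v : A | π v ∈ ({p, p + 1, p + 2} : Set (ZMod 6))} ∈ 𝓔 ∧
      {v : A | π v ∈ ({p + 1, p + 2, p + 3} : Set (ZMod 6))} ∈ 𝓔 :=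
  linear_implies_conditionC_general 𝓔 π htrans htotal
end
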